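/- Let m ∈ ℕ, let (s,p) ∈ 𝕀_m, and let z be uniformly distributed in 𝕄_m^d. Then ℙ( z ∈ 𝔹_m(s,p) ) ≥ 2^{−(m+4)}. -/

import Mathlib

open MeasureTheory Finset
open scoped Classical

noncomputable section

/-- The `k`-dispersion of a finite point set `P ⊆ [0,1]^d`: the supremum of the volumes of
axis-parallel boxes inside `[0,1]^d` containing at most `k` points of `P`. -/
def kdisp (d k : ℕ) (P : Finset (Fin d → ℝ)) : ℝ :=
  sSup { v : ℝ | ∃ a b : Fin d → ℝ,
    (∀ i, 0 ≤ a i ∧ a i ≤ b i ∧ b i ≤ 1) ∧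
    (P.filter (fun x => ∀ i, x i ∈ Set.Ioo (a i) (b i))).card ≤ k ∧
    v = ∏ i, (b i - a i) }

/-- The minimal `k`-dispersion over all `n`-point subsets of `[0,1]^d`. -/
def kdispStar (d k n : ℕ) : ℝ :=
  sInf { v : ℝ | ∃ P : Finset (Fin d → ℝ),
    (∀ x ∈ P, ∀ i, x i ∈ Set.Icc (0:ℝ) 1) ∧ P.card = n ∧ v = kdisp d k P }

/-- The one-dimensional mesh `𝕄_m = {1/2^m, 2/2^m, …, (2^m-1)/2^m}`. -/
def Mgrid (m : ℕ) : Finset ℝ := (Finset.Icc 1 (2 ^ m - 1)).image fun j : ℕ => (j : ℝ) / 2 ^ m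

/-- The mesh `𝕄_m^d`. -/
def Ggrid (m d : ℕ) : Finset (Fin d → ℝ) := Fintype.piFinset fun _ => Mgrid m

/-- `I` is a subinterval of `[0,1]`. -/
def IsIntervalIn01 (I : Set ℝ) : Prop := I ⊆ Set.Icc 0 1 ∧ I.OrdConnected

/-- Membership of the axis-parallel box `∏_ℓ I ℓ` in the family `Ω_m(s,p)`: the box has
volume exceeding `2^{-m}`, and for every coordinate `ℓ` one has
`s ℓ / 2^m < vol(I ℓ) ≤ (s ℓ + 1)/2^m` and `inf (I ℓ) ∈ [p ℓ - 2^{-m}, p ℓ)`. -/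
def memOmega (m : ℕ) {d : ℕ} (s : Fin d → ℕ) (p : Fin d → ℝ) (I : Fin d → Set ℝ) : Prop :=
  (∀ ℓ, IsIntervalIn01 (I ℓ)) ∧
  ((2:ℝ) ^ m)⁻¹ < (volume (Set.pi Set.univ I)).toReal ∧
  ∀ ℓ, (s ℓ : ℝ) / 2 ^ m < (volume (I ℓ)).toReal ∧
    (volume (I ℓ)).toReal ≤ ((s ℓ : ℝ) + 1) / 2 ^ m ∧
    sInf (I ℓ) ∈ Set.Ico (p ℓ - ((2:ℝ) ^ m)⁻¹) (p ℓ)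

/-- `(s,p)` is an admissible index pair, i.e. `(s,p) ∈ 𝕀_m`: the parameters lie in the
allowed ranges and `Ω_m(s,p) ≠ ∅`. -/
def memIm (m : ℕ) {d : ℕ} (s : Fin d → ℕ) (p : Fin d → ℝ) : Prop :=
  (∀ ℓ, s ℓ < 2 ^ m) ∧
  (∀ ℓ, ∃ j : ℕ, 1 ≤ j ∧ j ≤ 2 ^ m - 1 ∧ p ℓ = (j : ℝ) / 2 ^ m) ∧
  ∃ I, memOmega m s p I

/-- Membership of `z` in the box `𝔹_m(s,p) = ∏_ℓ [p ℓ, p ℓ + (s ℓ - 1)/2^m]`. -/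
def memBox (m : ℕ) {d : ℕ} (s : Fin d → ℕ) (p : Fin d → ℝ) (z : Fin d → ℝ) : Prop :=
  ∀ ℓ, z ℓ ∈ Set.Icc (p ℓ) (p ℓ + ((s ℓ : ℝ) - 1) / 2 ^ m)

/-!
Write `N = 2^m` and `p = j / N`. In coordinate `ℓ` the box `𝔹_m(s,p)` contains exactly `s ℓ`
points of `𝕄_m`, so the probability is `∏ s ℓ / (N - 1)`. A box of `Ω_m(s,p)` forces `s ℓ ≥ 1`,
`j ℓ + s ℓ ≤ N` and `1/N < ∏ (s ℓ + 1)/N`. With `a = s + 1` one has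
`(a - 1)/(N - 1) = (a/N) (1 - x)`, `x = (N - a)/(a (N - 1)) ∈ [0, 1/2]`, and
`x ≤ 2 log (N/a) / log N`; the volume bound then gives `∑ x ≤ 2`, and convexity of
`t ↦ 4^(-t)` gives `∏ (1 - x) ≥ 4^(-∑ x) ≥ 1/16`.
-/

namespace Real

lemma log_sq_le_self {x : ℝ} (hx : 1 ≤ x) : log x ^ 2 ≤ x := by
  set u := log x
  have hu : 0 ≤ u := log_nonneg hx
  have h_am_gm : u ≤ (1 + u / 4) ^ 2 := by nlinarith [sq_nonneg (1 - u / 4)]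
  calc u ^ 2 ≤ ((1 + u / 4) ^ 2) ^ 2 := pow_le_pow_left₀ hu h_am_gm 2
    _ = (1 + u / 4) ^ 4 := by ring
    _ ≤ exp (u / 4) ^ 4 :=
      pow_le_pow_left₀ (by positivity) (by linarith [add_one_le_exp (u / 4)]) 4
    _ = x := by
      rw [← exp_nat_mul, show ((4 : ℕ) : ℝ) * (u / 4) = u by push_cast; ring]
      exact exp_log (by linarith)

lemma exp_neg_log_four_mul_le_one_sub {x : ℝ} (h0 : 0 ≤ x) (h1 : x ≤ 1 / 2) :
    exp (-(log 4 * x)) ≤ 1 - x := by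
  -- `1 - x` is the chord of the convex function `exp (-(log 4 * x))` over `[0, 1/2]`
  have hlog4 : log 4 = 2 * log 2 := by
    rw [show (4 : ℝ) = 2 ^ 2 by norm_num, log_pow]; push_cast; ring
  have hchord := convexOn_exp.2 (Set.mem_univ 0) (Set.mem_univ (-log 2))
    (by linarith : 0 ≤ 1 - 2 * x) (by linarith : 0 ≤ 2 * x) (by ring)
  simp only [smul_eq_mul, exp_zero, exp_neg, exp_log two_pos] at hchord
  calc exp (-(log 4 * x)) = exp ((1 - 2 * x) * 0 + 2 * x * -log 2) := by rw [hlog4]; ring_nf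
    _ ≤ (1 - 2 * x) * 1 + 2 * x * 2⁻¹ := hchord
    _ = 1 - x := by ring

lemma sub_div_mul_sub_one_le_two_mul_log_div_div_log {N a : ℝ} (ha : 2 ≤ a) (haN : a ≤ N) :
    (N - a) / (a * (N - 1)) ≤ 2 * log (N / a) / log N := by
  have hN : 0 < N := by linarith
  have hlogN : 0 < log N := log_pos (by linarith)
  have hden : 0 < a * (N - 1) := by nlinarith
  rcases le_or_gt (a ^ 2) N with hsmall | hlarge
  · -- both sides are compared with `1`
    have hlhs : (N - a) / (a * (N - 1)) ≤ 1 := by rw [div_le_one hden]; nlinarith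
    have hrhs : log N ≤ 2 * log (N / a) := by
      rw [show (2 : ℝ) * log (N / a) = log ((N / a) ^ 2) by rw [log_pow]; push_cast; ring]
      refine log_le_log hN ?_
      rw [div_pow, le_div_iff₀ (by positivity)]
      nlinarith
    exact hlhs.trans ((one_le_div hlogN).2 hrhs)
  · have hlog_ratio : (N - a) / N ≤ log (N / a) := by
      have := log_le_sub_one_of_pos (show 0 < a / N by positivity)
      rw [← inv_div, log_inv, inv_div] at this
      rw [sub_div, div_self hN.ne']
      linarith
    have hlogN_le : log N ≤ a := by nlinarith [log_sq_le_self (show 1 ≤ N by linarith)]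
    have hkey : N * log N ≤ 2 * a * (N - 1) := by nlinarith
    calc (N - a) / (a * (N - 1)) ≤ 2 * ((N - a) / N) / log N := by
          rw [div_le_div_iff₀ hden hlogN, mul_div_assoc', div_mul_eq_mul_div, le_div_iff₀ hN]
          nlinarith
      _ ≤ 2 * log (N / a) / log N := by gcongr

end Real

section

open Real

lemma one_div_sixteen_le_prod_one_sub {ι : Type*} (t : Finset ι) (x : ι → ℝ)
    (hx0 : ∀ i ∈ t, 0 ≤ x i) (hx1 : ∀ i ∈ t, x i ≤ 1 / 2) (hsum : ∑ i ∈ t, x i ≤ 2) :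
    1 / 16 ≤ ∏ i ∈ t, (1 - x i) :=
  calc 1 / 16 = exp (-(log 4 * 2)) := by
        rw [show -(log 4 * 2) = log (1 / 16) by
          rw [one_div, log_inv, show (16 : ℝ) = 4 ^ 2 by norm_num, log_pow]; push_cast; ring,
          exp_log (by norm_num)]
    _ ≤ exp (-(log 4 * ∑ i ∈ t, x i)) := by gcongr
    _ = ∏ i ∈ t, exp (-(log 4 * x i)) := by rw [← exp_sum, mul_sum, ← sum_neg_distrib]
    _ ≤ ∏ i ∈ t, (1 - x i) := prod_le_prod (fun i _ ↦ (exp_pos _).le)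
        fun i hi ↦ exp_neg_log_four_mul_le_one_sub (hx0 i hi) (hx1 i hi)

lemma inv_sixteen_mul_le_prod_sub_one_div {ι : Type*} (t : Finset ι) {N : ℝ} (a : ι → ℝ)
    (hN : 1 < N) (ha : ∀ i ∈ t, 2 ≤ a i) (haN : ∀ i ∈ t, a i ≤ N)
    (hprod : N⁻¹ < ∏ i ∈ t, a i / N) :
    (16 * N)⁻¹ ≤ ∏ i ∈ t, (a i - 1) / (N - 1) := by
  have hN0 : 0 < N := by linarith
  have hlogN : 0 < log N := log_pos hN
  set x : ι → ℝ := fun i ↦ (N - a i) / (a i * (N - 1))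
  have hfactor : ∀ i ∈ t, (a i - 1) / (N - 1) = a i / N * (1 - x i) := by
    intro i hi
    have : a i ≠ 0 := by linarith [ha i hi]
    have : N - 1 ≠ 0 := by linarith
    simp only [x]
    field_simp
    ring
  have hx0 : ∀ i ∈ t, 0 ≤ x i := fun i hi ↦
    div_nonneg (by linarith [haN i hi]) (by nlinarith [ha i hi])
  have hx1 : ∀ i ∈ t, x i ≤ 1 / 2 := fun i hi ↦ by
    have := ha i hi
    rw [div_le_iff₀ (by nlinarith)]
    nlinarith
  have hlog_sum : ∑ i ∈ t, log (N / a i) ≤ log N := by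
    have hpos : 0 < ∏ i ∈ t, a i / N := (inv_pos.2 hN0).trans hprod
    rw [← log_prod fun i hi ↦ (div_pos hN0 (by linarith [ha i hi])).ne']
    calc log (∏ i ∈ t, N / a i) = -log (∏ i ∈ t, a i / N) := by
          rw [← log_inv, ← prod_inv_distrib]; simp only [inv_div]
      _ ≤ -log N⁻¹ := neg_le_neg (log_le_log (by positivity) hprod.le)
      _ = log N := by rw [log_inv, neg_neg]
  have hsum : ∑ i ∈ t, x i ≤ 2 :=
    calc ∑ i ∈ t, x i ≤ ∑ i ∈ t, 2 * log (N / a i) / log N :=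
          sum_le_sum fun i hi ↦ sub_div_mul_sub_one_le_two_mul_log_div_div_log (ha i hi) (haN i hi)
      _ = 2 * (∑ i ∈ t, log (N / a i)) / log N := by rw [mul_sum, sum_div]
      _ ≤ 2 * log N / log N := by gcongr
      _ = 2 := by field_simp
  calc (16 * N)⁻¹ = N⁻¹ * (1 / 16) := by ring
    _ ≤ (∏ i ∈ t, a i / N) * ∏ i ∈ t, (1 - x i) :=
        mul_le_mul hprod.le (one_div_sixteen_le_prod_one_sub t x hx0 hx1 hsum) (by norm_num)
          ((inv_pos.2 hN0).trans hprod).le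
    _ = ∏ i ∈ t, (a i - 1) / (N - 1) := by
        rw [← prod_mul_distrib]; exact prod_congr rfl fun i hi ↦ (hfactor i hi).symm

end

lemma natCast_div_two_pow_injective (m : ℕ) :
    Function.Injective fun j : ℕ ↦ (j : ℝ) / 2 ^ m := by
  intro a b h
  exact_mod_cast (div_left_inj' (pow_ne_zero m two_ne_zero)).1 h

lemma card_Mgrid (m : ℕ) : (Mgrid m).card = 2 ^ m - 1 := by
  rw [Mgrid, card_image_of_injective _ (natCast_div_two_pow_injective m), Nat.card_Icc]
  omega

lemma card_Ggrid (m d : ℕ) : (Ggrid m d).card = (2 ^ m - 1) ^ d := by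
  simp [Ggrid, card_Mgrid]

lemma card_filter_Mgrid_mem_Icc (m j k : ℕ) (hj : 1 ≤ j) (hjk : j + k ≤ 2 ^ m) :
    ((Mgrid m).filter fun y ↦
      y ∈ Set.Icc ((j : ℝ) / 2 ^ m) ((j : ℝ) / 2 ^ m + ((k : ℝ) - 1) / 2 ^ m)).card = k := by
  have h2m : (0 : ℝ) < 2 ^ m := by positivity
  have hIco : ((Icc 1 (2 ^ m - 1)).filter fun i : ℕ ↦
      (i : ℝ) / 2 ^ m ∈ Set.Icc ((j : ℝ) / 2 ^ m) ((j : ℝ) / 2 ^ m + ((k : ℝ) - 1) / 2 ^ m))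
      = Ico j (j + k) := by
    ext i
    rw [mem_filter, mem_Icc, mem_Ico, Set.mem_Icc, ← add_div, div_le_div_iff_of_pos_right h2m,
      div_le_div_iff_of_pos_right h2m, Nat.cast_le,
      show (j : ℝ) + ((k : ℝ) - 1) = ((j + k : ℕ) : ℝ) - 1 by push_cast; ring,
      le_sub_iff_add_le, ← Nat.cast_add_one, Nat.cast_le]
    omega
  rw [Mgrid, filter_image, card_image_of_injective _ (natCast_div_two_pow_injective m), hIco,
    Nat.card_Ico, Nat.add_sub_cancel_left]

lemma card_filter_memBox {m d : ℕ} {s : Fin d → ℕ} {p : Fin d → ℝ} {j : Fin d → ℕ}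
    (hpj : ∀ ℓ, p ℓ = (j ℓ : ℝ) / 2 ^ m) (hj : ∀ ℓ, 1 ≤ j ℓ) (hjs : ∀ ℓ, j ℓ + s ℓ ≤ 2 ^ m) :
    ((Ggrid m d).filter fun z ↦ memBox m s p z).card = ∏ ℓ, s ℓ := by
  have hpi : ((Ggrid m d).filter fun z ↦ memBox m s p z) = Fintype.piFinset fun ℓ ↦
      (Mgrid m).filter fun y ↦ y ∈ Set.Icc (p ℓ) (p ℓ + ((s ℓ : ℝ) - 1) / 2 ^ m) := by
    ext z
    simp [Ggrid, memBox, forall_and]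
  rw [hpi, Fintype.card_piFinset]
  refine prod_congr rfl fun ℓ _ ↦ ?_
  rw [hpj ℓ]
  exact card_filter_Mgrid_mem_Icc m (j ℓ) (s ℓ) (hj ℓ) (hjs ℓ)

lemma toReal_volume_le_one_sub_sInf {I : Set ℝ} (hI : I ⊆ Set.Icc 0 1) :
    (volume I).toReal ≤ 1 - sInf I := by
  rcases I.eq_empty_or_nonempty with rfl | hne
  · simp
  have hbdd : BddBelow I := bddBelow_Icc.mono hI
  have hsInf_le : sInf I ≤ 1 := (csInf_le hbdd hne.some_mem).trans (hI hne.some_mem).2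
  calc (volume I).toReal ≤ (volume (Set.Icc (sInf I) 1)).toReal :=
        ENNReal.toReal_mono measure_Icc_lt_top.ne
          (measure_mono fun y hy ↦ ⟨csInf_le hbdd hy, (hI hy).2⟩)
    _ = 1 - sInf I := by rw [Real.volume_Icc, ENNReal.toReal_ofReal (by linarith)]

lemma toReal_volume_le_one {I : Set ℝ} (hI : I ⊆ Set.Icc 0 1) : (volume I).toReal ≤ 1 :=
  (toReal_volume_le_one_sub_sInf hI).trans (by linarith [Real.sInf_nonneg fun x hx ↦ (hI hx).1])

namespace memOmega

variable {m d : ℕ} {s : Fin d → ℕ} {p : Fin d → ℝ} {I : Fin d → Set ℝ}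

lemma inv_two_pow_lt_prod (h : memOmega m s p I) :
    ((2 : ℝ) ^ m)⁻¹ < ∏ ℓ, (volume (I ℓ)).toReal := by
  simpa only [volume_pi_pi, ENNReal.toReal_prod] using h.2.1

lemma one_lt_two_pow (h : memOmega m s p I) : (1 : ℝ) < 2 ^ m := by
  have := h.inv_two_pow_lt_prod.trans_le
    (prod_le_one (fun _ _ ↦ ENNReal.toReal_nonneg) fun ℓ _ ↦ toReal_volume_le_one (h.1 ℓ).1)
  rwa [inv_lt_one₀ (by positivity)] at this

lemma one_le (h : memOmega m s p I) (ℓ : Fin d) : 1 ≤ s ℓ := by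
  by_contra! hs
  have hvol : (volume (I ℓ)).toReal ≤ ((2 : ℝ) ^ m)⁻¹ := by
    simpa [Nat.lt_one_iff.1 hs] using (h.2.2 ℓ).2.1
  refine h.inv_two_pow_lt_prod.not_ge ?_
  calc ∏ ℓ', (volume (I ℓ')).toReal
      = (volume (I ℓ)).toReal * ∏ ℓ' ∈ univ.erase ℓ, (volume (I ℓ')).toReal :=
        (mul_prod_erase _ _ (mem_univ ℓ)).symm
    _ ≤ (volume (I ℓ)).toReal := mul_le_of_le_one_right ENNReal.toReal_nonneg
        (prod_le_one (fun _ _ ↦ ENNReal.toReal_nonneg) fun ℓ' _ ↦ toReal_volume_le_one (h.1 ℓ').1)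
    _ ≤ ((2 : ℝ) ^ m)⁻¹ := hvol

lemma add_le_two_pow (h : memOmega m s p I) {j : Fin d → ℕ}
    (hpj : ∀ ℓ, p ℓ = (j ℓ : ℝ) / 2 ^ m) (ℓ : Fin d) : j ℓ + s ℓ ≤ 2 ^ m := by
  obtain ⟨hs, -, hinf, -⟩ := h.2.2 ℓ
  have hvol := toReal_volume_le_one_sub_sInf (h.1 ℓ).1
  have h2m : (0 : ℝ) < 2 ^ m := by positivity
  have hlt : (s ℓ : ℝ) / 2 ^ m < (2 ^ m + 1 - j ℓ) / 2 ^ m := by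
    rw [hpj ℓ] at hinf
    calc (s ℓ : ℝ) / 2 ^ m < 1 - sInf (I ℓ) := hs.trans_le hvol
      _ ≤ 1 - ((j ℓ : ℝ) / 2 ^ m - ((2 : ℝ) ^ m)⁻¹) := by linarith
      _ = (2 ^ m + 1 - j ℓ) / 2 ^ m := by field_simp; ring
  rw [div_lt_div_iff_of_pos_right h2m] at hlt
  have : j ℓ + s ℓ < 2 ^ m + 1 := by exact_mod_cast (by linarith : (j ℓ + s ℓ : ℝ) < 2 ^ m + 1)
  omega

lemma inv_two_pow_lt_prod_succ_div (h : memOmega m s p I) :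
    ((2 : ℝ) ^ m)⁻¹ < ∏ ℓ, ((s ℓ : ℝ) + 1) / 2 ^ m :=
  h.inv_two_pow_lt_prod.trans_le
    (prod_le_prod (fun _ _ ↦ ENNReal.toReal_nonneg) fun ℓ _ ↦ (h.2.2 ℓ).2.1)

end memOmega

theorem statement_5_general (m d : ℕ) (s : Fin d → ℕ) (p : Fin d → ℝ) (hsp : memIm m s p) :
    (((Ggrid m d).filter fun z => memBox m s p z).card : ℝ) / ((Ggrid m d).card : ℝ)
      ≥ ((2:ℝ) ^ (m + 4))⁻¹ := by
  obtain ⟨hs, hp, I, hI⟩ := hsp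
  choose j hj _ hpj using hp
  have hbound := inv_sixteen_mul_le_prod_sub_one_div univ (fun ℓ ↦ (s ℓ : ℝ) + 1)
    hI.one_lt_two_pow (fun ℓ _ ↦ by norm_cast; linarith [hI.one_le ℓ])
    (fun ℓ _ ↦ by exact_mod_cast hs ℓ) hI.inv_two_pow_lt_prod_succ_div
  simp only [add_sub_cancel_right, prod_div_distrib, prod_const, card_univ,
    Fintype.card_fin] at hbound
  rw [card_filter_memBox hpj hj (hI.add_le_two_pow hpj), card_Ggrid,
    Nat.cast_pow (2 ^ m - 1), Nat.cast_sub Nat.one_le_two_pow]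
  push_cast
  calc ((2 : ℝ) ^ (m + 4))⁻¹ = (16 * 2 ^ m)⁻¹ := by ring
    _ ≤ _ := hbound

/-- For `(s,p) ∈ 𝕀_m` and `z` uniformly distributed in `𝕄_m^d`, the probability that
`z ∈ 𝔹_m(s,p)` is at least `2^{-(m+4)}`. -/
theorem statement_5 (m d : ℕ) (hm : 1 ≤ m) (hd : 1 ≤ d)
    (s : Fin d → ℕ) (p : Fin d → ℝ) (hsp : memIm m s p) :
    (((Ggrid m d).filter fun z => memBox m s p z).card : ℝ) / ((Ggrid m d).card : ℝ)
      ≥ ((2:ℝ) ^ (m + 4))⁻¹ :=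
  statement_5_general m d s p hsp
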